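/- arXiv:1003.2045 — 3 statements merged into one kernel-verified Lean document; each statement's English description precedes it below -/
import Mathlib

section
/- Let x be a unit speed spacelike curve in Minkowski 4-space E₁⁴ with Frenet frame {T, N, B₁, B₂}, nowhere-vanishing curvatures k₁, k₂, k₃ and signs ε₁, ε₂. Let U ∈ ℝ⁴ be a constant vector such that s ↦ ⟪B₂(s), U⟫ is constant, and set a₁(s) = ⟪U, T(s)⟫. Then a₁ satisfies the second order linear differential equation ε₁ a₁''(s) − ε₁ (k₁'(s)/k₁(s)) a₁'(s) + k₁(s)² a₁(s) = 0 for all s. -/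
/-- The Minkowski bilinear form on `ℝ⁴`: `⟪v,w⟫ = -v₀w₀ + v₁w₁ + v₂w₂ + v₃w₃`. -/
noncomputable def mink (v w : Fin 4 → ℝ) : ℝ :=
  -(v 0 * w 0) + v 1 * w 1 + v 2 * w 2 + v 3 * w 3

/-- A unit speed spacelike curve in Minkowski 4-space `E₁⁴` together with a Frenet
frame `{T, N, B₁, B₂}`, nowhere-vanishing curvatures `k₁, k₂, k₃` and signs `ε₁, ε₂`. -/
structure SpacelikeFrenetCurve where
  x : ℝ → Fin 4 → ℝ
  T : ℝ → Fin 4 → ℝ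
  N : ℝ → Fin 4 → ℝ
  B₁ : ℝ → Fin 4 → ℝ
  B₂ : ℝ → Fin 4 → ℝ
  k₁ : ℝ → ℝ
  k₂ : ℝ → ℝ
  k₃ : ℝ → ℝ
  ε₁ : ℝ
  ε₂ : ℝ
  smooth_x : ContDiff ℝ (⊤ : ℕ∞) x
  smooth_T : ContDiff ℝ (⊤ : ℕ∞) T
  smooth_N : ContDiff ℝ (⊤ : ℕ∞) N
  smooth_B₁ : ContDiff ℝ (⊤ : ℕ∞) B₁
  smooth_B₂ : ContDiff ℝ (⊤ : ℕ∞) B₂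
  smooth_k₁ : ContDiff ℝ (⊤ : ℕ∞) k₁
  smooth_k₂ : ContDiff ℝ (⊤ : ℕ∞) k₂
  smooth_k₃ : ContDiff ℝ (⊤ : ℕ∞) k₃
  k₁_ne : ∀ s, k₁ s ≠ 0
  k₂_ne : ∀ s, k₂ s ≠ 0
  k₃_ne : ∀ s, k₃ s ≠ 0
  ε₁_sign : ε₁ = 1 ∨ ε₁ = -1
  ε₂_sign : ε₂ = 1 ∨ ε₂ = -1
  tangent : ∀ s, deriv x s = T s
  TT : ∀ s, mink (T s) (T s) = 1
  NN : ∀ s, mink (N s) (N s) = ε₁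
  B₁B₁ : ∀ s, mink (B₁ s) (B₁ s) = -(ε₁ * ε₂)
  B₂B₂ : ∀ s, mink (B₂ s) (B₂ s) = ε₂
  TN : ∀ s, mink (T s) (N s) = 0
  TB₁ : ∀ s, mink (T s) (B₁ s) = 0
  TB₂ : ∀ s, mink (T s) (B₂ s) = 0
  NB₁ : ∀ s, mink (N s) (B₁ s) = 0
  NB₂ : ∀ s, mink (N s) (B₂ s) = 0
  B₁B₂ : ∀ s, mink (B₁ s) (B₂ s) = 0
  frenet_T : ∀ s, deriv T s = k₁ s • N s
  frenet_N : ∀ s, deriv N s = (-(ε₁ * k₁ s)) • T s + k₂ s • B₁ s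
  frenet_B₁ : ∀ s, deriv B₁ s = (ε₂ * k₂ s) • N s + k₃ s • B₂ s
  frenet_B₂ : ∀ s, deriv B₂ s = (ε₁ * k₃ s) • B₁ s

/-- `x` is a `B₂`-slant helix: a nonzero constant vector `U` makes a constant
"angle" with the second binormal, i.e. `s ↦ ⟪B₂ s, U⟫` is constant. -/
def IsB₂SlantHelix (c : SpacelikeFrenetCurve) : Prop :=
  ∃ U : Fin 4 → ℝ, U ≠ 0 ∧ ∃ C : ℝ, ∀ s : ℝ, mink (c.B₂ s) U = C

lemma mink_smul_left (r : ℝ) (v w : Fin 4 → ℝ) : mink (r • v) w = r * mink v w := by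
  simp [mink]; ring

lemma mink_smul_right (r : ℝ) (v w : Fin 4 → ℝ) : mink v (r • w) = r * mink v w := by
  simp [mink]; ring

lemma mink_add_right (v w₁ w₂ : Fin 4 → ℝ) : mink v (w₁ + w₂) = mink v w₁ + mink v w₂ := by
  simp [mink]; ring

lemma mink_comm (v w : Fin 4 → ℝ) : mink v w = mink w v := by
  simp [mink]; ring

lemma hasDerivAt_proj {g : ℝ → Fin 4 → ℝ} {g' : Fin 4 → ℝ} {s : ℝ}
    (h : HasDerivAt g g' s) (i : Fin 4) : HasDerivAt (fun t => g t i) (g' i) s := by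
  have := (ContinuousLinearMap.proj (R := ℝ) (φ := fun _ : Fin 4 => ℝ) i).hasFDerivAt.comp_hasDerivAt s h
  exact this

lemma hasDerivAt_mink {U : Fin 4 → ℝ} {g : ℝ → Fin 4 → ℝ} {g' : Fin 4 → ℝ} {s : ℝ}
    (h : HasDerivAt g g' s) : HasDerivAt (fun t => mink U (g t)) (mink U g') s := by
  have h0 := hasDerivAt_proj h 0
  have h1 := hasDerivAt_proj h 1
  have h2 := hasDerivAt_proj h 2
  have h3 := hasDerivAt_proj h 3
  have := (((h0.const_mul (U 0)).neg.add (h1.const_mul (U 1))).add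
    (h2.const_mul (U 2))).add (h3.const_mul (U 3))
  exact this

/-- For a constant vector `U` with `s ↦ ⟪B₂ s, U⟫` constant, `a₁ = ⟪U, T⟫` satisfies
the second order linear ODE `ε₁ a₁'' − ε₁ (k₁'/k₁) a₁' + k₁² a₁ = 0`. -/
theorem stmt2 (c : SpacelikeFrenetCurve) (U : Fin 4 → ℝ) (C : ℝ)
    (hU : ∀ s : ℝ, mink (c.B₂ s) U = C)
    (a₁ : ℝ → ℝ) (ha₁ : ∀ s : ℝ, a₁ s = mink U (c.T s)) :
    ∀ s : ℝ, c.ε₁ * deriv (deriv a₁) s - c.ε₁ * (deriv c.k₁ s / c.k₁ s) * deriv a₁ s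
      + c.k₁ s ^ 2 * a₁ s = 0 := by

  -- basic facts
  have hε₁ : c.ε₁ ≠ 0 := by rcases c.ε₁_sign with h | h <;> rw [h] <;> norm_num
  have hε₁sq : c.ε₁ * c.ε₁ = 1 := by rcases c.ε₁_sign with h | h <;> rw [h] <;> norm_num
  have hT : ∀ s, HasDerivAt c.T (c.k₁ s • c.N s) s := fun s => by
    have := (c.smooth_T.differentiable (by simp) s).hasDerivAt
    rwa [c.frenet_T s] at this
  have hN : ∀ s, HasDerivAt c.N ((-(c.ε₁ * c.k₁ s)) • c.T s + c.k₂ s • c.B₁ s) s := fun s => by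
    have := (c.smooth_N.differentiable (by simp) s).hasDerivAt
    rwa [c.frenet_N s] at this
  have hB₂ : ∀ s, HasDerivAt c.B₂ ((c.ε₁ * c.k₃ s) • c.B₁ s) s := fun s => by
    have := (c.smooth_B₂.differentiable (by simp) s).hasDerivAt
    rwa [c.frenet_B₂ s] at this
  have hk₁ : ∀ s, HasDerivAt c.k₁ (deriv c.k₁ s) s := fun s =>
    (c.smooth_k₁.differentiable (by simp) s).hasDerivAt
  -- b = ⟪U, B₁⟫ = 0
  have hb : ∀ s, mink U (c.B₁ s) = 0 := by
    intro s
    have h1 : HasDerivAt (fun t => mink U (c.B₂ t)) (mink U ((c.ε₁ * c.k₃ s) • c.B₁ s)) s :=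
      hasDerivAt_mink (hB₂ s)
    have h2 : (fun t => mink U (c.B₂ t)) = fun _ => C := by
      funext t; rw [mink_comm]; exact hU t
    rw [h2] at h1
    have h3 : mink U ((c.ε₁ * c.k₃ s) • c.B₁ s) = 0 := by
      have := h1.deriv
      rw [deriv_const] at this
      exact this.symm
    rw [mink_smul_right] at h3
    exact (mul_eq_zero.mp h3).resolve_left (mul_ne_zero hε₁ (c.k₃_ne s))
  -- a₁' = k₁ ⟪U,N⟫
  have ha₁eq : a₁ = fun t => mink U (c.T t) := funext ha₁
  have hda₁ : ∀ s, HasDerivAt a₁ (c.k₁ s * mink U (c.N s)) s := by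
    intro s
    rw [ha₁eq]
    have := hasDerivAt_mink (U := U) (hT s)
    rwa [mink_smul_right] at this
  have hderiv_a₁ : deriv a₁ = fun t => c.k₁ t * mink U (c.N t) := by
    funext t; exact (hda₁ t).deriv
  -- ⟪U,N⟫' = -ε₁k₁ a₁
  have hdN : ∀ s, HasDerivAt (fun t => mink U (c.N t)) (-(c.ε₁ * c.k₁ s) * a₁ s) s := by
    intro s
    have := hasDerivAt_mink (U := U) (hN s)
    rw [mink_add_right, mink_smul_right, mink_smul_right, hb s, mul_zero, add_zero] at this
    rw [ha₁ s]
    exact this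
  intro s
  have hdd : HasDerivAt (deriv a₁)
      (deriv c.k₁ s * mink U (c.N s) + c.k₁ s * (-(c.ε₁ * c.k₁ s) * a₁ s)) s := by
    rw [hderiv_a₁]
    exact (hk₁ s).mul (hdN s)
  have h2 : deriv (deriv a₁) s
      = deriv c.k₁ s * mink U (c.N s) + c.k₁ s * (-(c.ε₁ * c.k₁ s) * a₁ s) := hdd.deriv
  have h1 : deriv a₁ s = c.k₁ s * mink U (c.N s) := (hda₁ s).deriv
  rw [h2, h1]
  have hk := c.k₁_ne s
  have hε₁sq' : c.ε₁ ^ 2 = 1 := by rw [sq]; exact hε₁sq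
  field_simp
  linear_combination (-(c.k₁ s ^ 2 * a₁ s)) * hε₁sq'
end

section
/- Let x be a unit speed spacelike curve in Minkowski 4-space E₁⁴ with Frenet frame {T, N, B₁, B₂}, nowhere-vanishing curvatures k₁, k₂, k₃ and signs ε₁ = −1, ε₂ ∈ {−1,1}. Let U ∈ ℝ⁴ be a constant vector such that s ↦ ⟪B₂(s), U⟫ is constant, and set a₁(s) = ⟪U, T(s)⟫. Then there exist constants A, B ∈ ℝ such that a₁(s) = A cosh(∫₀ˢ k₁(t) dt) + B sinh(∫₀ˢ k₁(t) dt) for all s. -/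
private lemma mink_hasDerivAt {f : ℝ → Fin 4 → ℝ} {f' : Fin 4 → ℝ} {s : ℝ}
    (U : Fin 4 → ℝ) (hf : HasDerivAt f f' s) :
    HasDerivAt (fun t => mink U (f t)) (mink U f') s := by
  have h := hasDerivAt_pi.1 hf
  have : HasDerivAt (fun t => -(U 0 * f t 0) + U 1 * f t 1 + U 2 * f t 2 + U 3 * f t 3)
      (-(U 0 * f' 0) + U 1 * f' 1 + U 2 * f' 2 + U 3 * f' 3) s :=
    ((((h 0).const_mul (U 0)).neg.add ((h 1).const_mul (U 1))).add
      ((h 2).const_mul (U 2))).add ((h 3).const_mul (U 3))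
  simpa [mink] using this

/-- Case `ε₁ = −1`: `a₁ = ⟪U, T⟫` has the form
`A cosh(∫₀ˢ k₁) + B sinh(∫₀ˢ k₁)` for some constants `A, B`. -/
theorem stmt4 (c : SpacelikeFrenetCurve) (hε : c.ε₁ = -1)
    (U : Fin 4 → ℝ) (C : ℝ) (hU : ∀ s : ℝ, mink (c.B₂ s) U = C) :
    ∃ A B : ℝ, ∀ s : ℝ, mink U (c.T s) =
      A * Real.cosh (∫ t in (0:ℝ)..s, c.k₁ t) +
      B * Real.sinh (∫ t in (0:ℝ)..s, c.k₁ t) := by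
  have msymm : ∀ v w, mink v w = mink w v := by intro v w; simp [mink]; ring
  set a1 : ℝ → ℝ := fun s => mink U (c.T s) with ha1
  set a2 : ℝ → ℝ := fun s => mink U (c.N s) with ha2
  set θ : ℝ → ℝ := fun s => ∫ t in (0:ℝ)..s, c.k₁ t with hθdef
  have hTd : ∀ s, HasDerivAt c.T (c.k₁ s • c.N s) s := fun s => by
    have := (c.smooth_T.differentiable (by simp) s).hasDerivAt
    rwa [c.frenet_T s] at this
  have hNd : ∀ s, HasDerivAt c.N ((-(c.ε₁ * c.k₁ s)) • c.T s + c.k₂ s • c.B₁ s) s := fun s => by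
    have := (c.smooth_N.differentiable (by simp) s).hasDerivAt
    rwa [c.frenet_N s] at this
  have hB₂d : ∀ s, HasDerivAt c.B₂ ((c.ε₁ * c.k₃ s) • c.B₁ s) s := fun s => by
    have := (c.smooth_B₂.differentiable (by simp) s).hasDerivAt
    rwa [c.frenet_B₂ s] at this
  -- ⟪U, B₁⟫ = 0
  have hUB₁ : ∀ s, mink U (c.B₁ s) = 0 := by
    intro s
    have hconst : HasDerivAt (fun t => mink U (c.B₂ t)) 0 s := by
      have : (fun t => mink U (c.B₂ t)) = fun _ => C := by
        funext t; rw [msymm]; exact hU t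
      rw [this]; exact hasDerivAt_const s C
    have h2 := mink_hasDerivAt U (hB₂d s)
    have h3 := h2.unique hconst
    have : (c.ε₁ * c.k₃ s) * mink U (c.B₁ s) = 0 := by
      rw [← h3]; simp [mink, Pi.smul_apply, smul_eq_mul]; ring
    have hne : c.ε₁ * c.k₃ s ≠ 0 := by
      rw [hε]; simpa using c.k₃_ne s
    exact (mul_eq_zero.1 this).resolve_left hne
  have ha1d : ∀ s, HasDerivAt a1 (c.k₁ s * a2 s) s := fun s => by
    have h := mink_hasDerivAt U (hTd s)
    have : mink U (c.k₁ s • c.N s) = c.k₁ s * a2 s := by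
      simp [mink, ha2, Pi.smul_apply, smul_eq_mul]; ring
    rwa [this] at h
  have ha2d : ∀ s, HasDerivAt a2 (c.k₁ s * a1 s) s := fun s => by
    have h := mink_hasDerivAt U (hNd s)
    have : mink U ((-(c.ε₁ * c.k₁ s)) • c.T s + c.k₂ s • c.B₁ s)
        = -(c.ε₁ * c.k₁ s) * a1 s + c.k₂ s * mink U (c.B₁ s) := by
      simp [mink, ha1, Pi.smul_apply, smul_eq_mul, Pi.add_apply]; ring
    rw [this, hUB₁ s, hε] at h
    simpa using h
  have hk₁c : Continuous c.k₁ := c.smooth_k₁.continuous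
  have hθd : ∀ s, HasDerivAt θ (c.k₁ s) s := fun s =>
    intervalIntegral.integral_hasDerivAt_right (hk₁c.intervalIntegrable 0 s)
      (hk₁c.stronglyMeasurableAtFilter _ _) hk₁c.continuousAt
  have hθ0 : θ 0 = 0 := by simp [hθdef]
  -- F and G
  set F : ℝ → ℝ := fun s => a1 s * Real.cosh (θ s) - a2 s * Real.sinh (θ s) with hF
  set G : ℝ → ℝ := fun s => a2 s * Real.cosh (θ s) - a1 s * Real.sinh (θ s) with hG
  have hFd : ∀ s, HasDerivAt F 0 s := fun s => by
    have h := ((ha1d s).mul ((hθd s).cosh)).sub ((ha2d s).mul ((hθd s).sinh))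
    exact h.congr_deriv (by ring)
  have hGd : ∀ s, HasDerivAt G 0 s := fun s => by
    have h := ((ha2d s).mul ((hθd s).cosh)).sub ((ha1d s).mul ((hθd s).sinh))
    exact h.congr_deriv (by ring)
  have hFc : ∀ s, F s = F 0 :=
    fun s => is_const_of_deriv_eq_zero (fun t => (hFd t).differentiableAt)
      (fun t => (hFd t).deriv) s 0
  have hGc : ∀ s, G s = G 0 :=
    fun s => is_const_of_deriv_eq_zero (fun t => (hGd t).differentiableAt)
      (fun t => (hGd t).deriv) s 0
  refine ⟨F 0, G 0, fun s => ?_⟩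
  have key : a1 s = F s * Real.cosh (θ s) + G s * Real.sinh (θ s) := by
    have h := Real.cosh_sq_sub_sinh_sq (θ s)
    have : F s * Real.cosh (θ s) + G s * Real.sinh (θ s)
        = a1 s * (Real.cosh (θ s) ^ 2 - Real.sinh (θ s) ^ 2) := by
      simp only [hF, hG]; ring
    rw [this, h, mul_one]
  calc mink U (c.T s) = a1 s := rfl
    _ = F s * Real.cosh (θ s) + G s * Real.sinh (θ s) := key
    _ = F 0 * Real.cosh (∫ t in (0:ℝ)..s, c.k₁ t) + G 0 * Real.sinh (∫ t in (0:ℝ)..s, c.k₁ t) := by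
        rw [hFc s, hGc s]
end

section
/- Let x be a unit speed spacelike curve in Minkowski 4-space E₁⁴ with Frenet frame {T, N, B₁, B₂}, nowhere-vanishing curvatures k₁, k₂, k₃ and signs ε₁, ε₂ ∈ {−1,1}. Suppose there exists a C²-function f : ℝ → ℝ with f(s) k₁(s) = ε₁ (k₃/k₂)'(s) and f'(s) = −k₁(s) · (k₃(s)/k₂(s)) for all s. Then the vector field U(s) := −f(s) T(s) + ε₁ (k₃(s)/k₂(s)) N(s) − B₂(s) satisfies dU/ds = 0 (so U is a constant vector), U(s) ≠ 0, and s ↦ ⟪B₂(s), U(s)⟫ is constant; hence x is a B₂-slant helix. -/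
/-- Converse construction: given a `C²` function `f` with `f k₁ = ε₁ (k₃/k₂)'` and
`f' = −k₁ (k₃/k₂)`, the vector field `U = −f T + ε₁ (k₃/k₂) N − B₂` is constant, nonzero,
makes a constant angle with `B₂`, and hence `x` is a `B₂`-slant helix. -/
theorem stmt13 (c : SpacelikeFrenetCurve)
    (f : ℝ → ℝ) (hf2 : ContDiff ℝ 2 f)
    (hfa : ∀ s : ℝ, f s * c.k₁ s = c.ε₁ * deriv (fun t => c.k₃ t / c.k₂ t) s)
    (hfb : ∀ s : ℝ, deriv f s = -(c.k₁ s * (c.k₃ s / c.k₂ s)))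
    (U : ℝ → Fin 4 → ℝ)
    (hUdef : ∀ s : ℝ, U s =
        (-f s) • c.T s + (c.ε₁ * (c.k₃ s / c.k₂ s)) • c.N s - c.B₂ s) :
    (∀ s : ℝ, deriv U s = 0) ∧ (∀ s : ℝ, U s ≠ 0) ∧
    (∃ C : ℝ, ∀ s : ℝ, mink (c.B₂ s) (U s) = C) ∧ IsB₂SlantHelix c := by

  classical
  set g : ℝ → ℝ := fun t => c.k₃ t / c.k₂ t with hg
  have hgdiff : Differentiable ℝ g :=
    (c.smooth_k₃.differentiable (by simp)).div (c.smooth_k₂.differentiable (by simp)) c.k₂_ne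
  have hfdiff : Differentiable ℝ f := hf2.differentiable (by norm_num)
  have hTdiff : Differentiable ℝ c.T := c.smooth_T.differentiable (by simp)
  have hNdiff : Differentiable ℝ c.N := c.smooth_N.differentiable (by simp)
  have hB₂diff : Differentiable ℝ c.B₂ := c.smooth_B₂.differentiable (by simp)
  have hε₁ : c.ε₁ * c.ε₁ = 1 := by rcases c.ε₁_sign with h | h <;> rw [h] <;> norm_num
  have hε₂ : c.ε₂ ≠ 0 := by rcases c.ε₂_sign with h | h <;> rw [h] <;> norm_num
  have hgk : ∀ s, g s * c.k₂ s = c.k₃ s := fun s => div_mul_cancel₀ _ (c.k₂_ne s)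
  have hUfun : U = fun s => (-f s) • c.T s + (c.ε₁ * g s) • c.N s - c.B₂ s := by
    funext s; exact hUdef s
  -- derivative of U is zero
  have hderiv : ∀ s : ℝ, deriv U s = 0 := by
    intro s
    have hf' : HasDerivAt (fun t => -f t) (-deriv f s) s :=
      ((hfdiff s).hasDerivAt).neg
    have hT' : HasDerivAt c.T (c.k₁ s • c.N s) s := by
      have := (hTdiff s).hasDerivAt
      rwa [c.frenet_T s] at this
    have hN' : HasDerivAt c.N ((-(c.ε₁ * c.k₁ s)) • c.T s + c.k₂ s • c.B₁ s) s := by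
      have := (hNdiff s).hasDerivAt
      rwa [c.frenet_N s] at this
    have hB₂' : HasDerivAt c.B₂ ((c.ε₁ * c.k₃ s) • c.B₁ s) s := by
      have := (hB₂diff s).hasDerivAt
      rwa [c.frenet_B₂ s] at this
    have hg' : HasDerivAt (fun t => c.ε₁ * g t) (c.ε₁ * deriv g s) s :=
      ((hgdiff s).hasDerivAt).const_mul c.ε₁
    have h1 : HasDerivAt (fun t => (-f t) • c.T t)
        ((-f s) • (c.k₁ s • c.N s) + (-deriv f s) • c.T s) s := hf'.smul hT'
    have h2 : HasDerivAt (fun t => (c.ε₁ * g t) • c.N t)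
        ((c.ε₁ * g s) • ((-(c.ε₁ * c.k₁ s)) • c.T s + c.k₂ s • c.B₁ s)
          + (c.ε₁ * deriv g s) • c.N s) s := hg'.smul hN'
    have hU' : HasDerivAt U
        ((-f s) • (c.k₁ s • c.N s) + (-deriv f s) • c.T s
          + ((c.ε₁ * g s) • ((-(c.ε₁ * c.k₁ s)) • c.T s + c.k₂ s • c.B₁ s)
          + (c.ε₁ * deriv g s) • c.N s) - (c.ε₁ * c.k₃ s) • c.B₁ s) s := by
      rw [hUfun]; exact (h1.add h2).sub hB₂'
    rw [hU'.deriv]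
    have hdf : deriv f s = -(c.k₁ s * g s) := hfb s
    have hdg : deriv g s = c.ε₁ * (f s * c.k₁ s) := by
      have := hfa s
      rcases c.ε₁_sign with h | h <;> rw [h] at this ⊢ <;> simp [hg] at this ⊢ <;> linarith
    funext i
    simp only [Pi.add_apply, Pi.sub_apply, Pi.smul_apply, smul_eq_mul, Pi.zero_apply,
      hdf, hdg]
    have := hgk s
    linear_combination (f s * c.k₁ s * c.N s i - c.k₁ s * g s * c.T s i) * hε₁ +
      c.ε₁ * c.B₁ s i * this
  -- mink value
  have hmB₂T : ∀ s, mink (c.B₂ s) (c.T s) = 0 := by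
    intro s; have := c.TB₂ s; simp only [mink] at this ⊢; linarith
  have hmB₂N : ∀ s, mink (c.B₂ s) (c.N s) = 0 := by
    intro s; have := c.NB₂ s; simp only [mink] at this ⊢; linarith
  have hval : ∀ s : ℝ, mink (c.B₂ s) (U s) = -c.ε₂ := by
    intro s
    have h1 := hmB₂T s
    have h2 := hmB₂N s
    have h3 := c.B₂B₂ s
    rw [hUdef s]
    simp only [mink, Pi.add_apply, Pi.sub_apply, Pi.smul_apply, smul_eq_mul] at h1 h2 h3 ⊢
    linear_combination (-f s) * h1 + (c.ε₁ * g s) * h2 - h3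
  have hUne : ∀ s : ℝ, U s ≠ 0 := by
    intro s h
    have := hval s
    rw [h] at this
    simp [mink] at this
    exact hε₂ this
  have hUdiff : Differentiable ℝ U := by
    rw [hUfun]
    exact ((hfdiff.neg.smul hTdiff).add
      ((hgdiff.const_mul c.ε₁).smul hNdiff)).sub hB₂diff
  have hconst : ∀ s : ℝ, U s = U 0 := fun s =>
    is_const_of_deriv_eq_zero hUdiff hderiv s 0
  refine ⟨hderiv, hUne, ⟨-c.ε₂, hval⟩, ⟨U 0, hUne 0, -c.ε₂, fun s => ?_⟩⟩
  rw [← hconst s]; exact hval s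
end
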